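/- arXiv:1311.4721 — 9 statements merged into one kernel-verified Lean document; each statement's English description precedes it below -/
import Mathlib

section
/- Let n, l be positive integers, α = n/4 and w = 2l + log₂(n), with n a power of 2 large enough that w ≤ α. Then 2^l · n · C(α, w) / C(n, w) ≤ (1/4)^l. -/
lemma descFac_aux (a : ℕ) : ∀ w : ℕ, w ≤ a →
    4 ^ w * a.descFactorial w ≤ (4 * a).descFactorial w := by
  intro w
  induction w with
  | zero => simp
  | succ k ih =>
    intro h
    rw [Nat.descFactorial_succ, Nat.descFactorial_succ]
    have h1 : 4 ^ k * a.descFactorial k ≤ (4 * a).descFactorial k := ih (by omega)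
    calc 4 ^ (k + 1) * ((a - k) * a.descFactorial k)
        = (4 * (a - k)) * (4 ^ k * a.descFactorial k) := by ring
      _ ≤ (4 * a - k) * ((4 * a).descFactorial k) := by
          apply Nat.mul_le_mul (by omega) h1

lemma choose_aux (a w : ℕ) : 4 ^ w * a.choose w ≤ (4 * a).choose w := by
  rcases le_or_gt w a with h | h
  · have h1 := descFac_aux a w h
    rw [Nat.descFactorial_eq_factorial_mul_choose, Nat.descFactorial_eq_factorial_mul_choose] at h1
    have := Nat.factorial_pos w
    calc 4 ^ w * a.choose w = ((Nat.factorial w) * (4 ^ w * a.choose w)) / (Nat.factorial w) := by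
          rw [Nat.mul_div_cancel_left _ this]
      _ ≤ ((Nat.factorial w) * (4 * a).choose w) / (Nat.factorial w) := by
          apply Nat.div_le_div_right; rw [← mul_assoc, mul_comm ((Nat.factorial w)) (4^w), mul_assoc]; exact h1
      _ = (4 * a).choose w := Nat.mul_div_cancel_left _ this
  · rw [Nat.choose_eq_zero_of_lt h]; simp

/-- Let `n, l` be positive integers, `α = n/4` and `w = 2l + log₂ n`, with `n` a power of 2
large enough that `w ≤ α`. Then `2^l · n · C(α, w) / C(n, w) ≤ (1/4)^l`. -/
theorem binom_ratio_bound (n l : ℕ) (hl : 0 < l) (hn : ∃ s : ℕ, n = 2 ^ s)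
    (hwα : 2 * l + Nat.log 2 n ≤ n / 4) :
    (2 : ℝ) ^ l * (n : ℝ) * ((n / 4).choose (2 * l + Nat.log 2 n) : ℝ) /
      (n.choose (2 * l + Nat.log 2 n) : ℝ) ≤ (1 / 4 : ℝ) ^ l := by
  obtain ⟨s, rfl⟩ := hn
  set w := 2 * l + Nat.log 2 (2 ^ s) with hw
  have hlog : Nat.log 2 (2 ^ s) = s := Nat.log_pow (by norm_num) s
  have hn4 : 2 ^ s / 4 ≤ 2 ^ s := Nat.div_le_self _ _
  have hwn : w ≤ 2 ^ s := le_trans hwα hn4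
  have hs2 : 2 ≤ s := by
    by_contra h
    interval_cases s <;> simp_all <;> omega
  have h4 : 4 * (2 ^ s / 4) = 2 ^ s := by
    have : (2:ℕ) ^ s = 4 * 2 ^ (s - 2) := by
      rw [show (4:ℕ) = 2^2 by norm_num, ← pow_add]
      congr 1; omega
    rw [this]; rw [Nat.mul_div_cancel_left _ (by norm_num)]
  -- key nat inequality
  have key : 4 ^ w * (2 ^ s / 4).choose w ≤ (2 ^ s).choose w := by
    have := choose_aux (2 ^ s / 4) w
    rwa [h4] at this
  have hCn : 0 < (2 ^ s).choose w := Nat.choose_pos hwn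
  have hCnR : (0:ℝ) < ((2 ^ s).choose w : ℝ) := by exact_mod_cast hCn
  rw [div_le_iff₀ hCnR]
  have keyR : (4:ℝ) ^ w * ((2 ^ s / 4).choose w : ℝ) ≤ ((2 ^ s).choose w : ℝ) := by
    exact_mod_cast key
  have hCa : (0:ℝ) ≤ ((2 ^ s / 4).choose w : ℝ) := Nat.cast_nonneg _
  calc (2:ℝ) ^ l * ((2:ℕ) ^ s : ℕ) * ((2 ^ s / 4).choose w : ℝ)
      ≤ (1/4:ℝ) ^ l * 4 ^ w * ((2 ^ s / 4).choose w : ℝ) := by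
        apply mul_le_mul_of_nonneg_right _ hCa
        push_cast
        have hwval : w = 2 * l + s := by rw [hw, hlog]
        rw [hwval, pow_add, two_mul, pow_add]
        have e1 : (1/4:ℝ) ^ l * (4 ^ l * 4 ^ l * 4 ^ s) = 4 ^ l * 4 ^ s := by
          rw [div_pow, one_pow]
          field_simp
        rw [e1]
        exact mul_le_mul (pow_le_pow_left₀ (by norm_num) (by norm_num) l)
          (pow_le_pow_left₀ (by norm_num) (by norm_num) s) (by positivity) (by positivity)
    _ = (1/4:ℝ) ^ l * (4 ^ w * ((2 ^ s / 4).choose w : ℝ)) := by ring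
    _ ≤ (1/4:ℝ) ^ l * ((2 ^ s).choose w : ℝ) := by
        apply mul_le_mul_of_nonneg_left keyR (by positivity)
end

section
/- Let g : Fin (C(n,w)) → Fin (2^l) be any function assigning an l-bit message to each w-element subset of an n-element ground set, and fix a vertex k among the n elements. For each message m, the number of w-element sets S with g(S) = m, k ∉ S, and |⋃ {U : g(U) = m, k ∉ U}| ≤ α is at most C(α, w). Consequently, the total number of w-element sets that are 'α-safe' for at least one of the n vertices is at most 2^l · n · C(α, w). -/
open Finset in
open Classical in
/-- Counting `α`-safe sets: for a message function `g` on `w`-subsets of an `n`-element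
ground set and any fixed message `m` and vertex `k`, the number of `w`-sets `S` with
`g S = m`, `k ∉ S` and `|⋃ {U : g U = m, k ∉ U}| ≤ α` is at most `C(α,w)`; consequently,
the number of `w`-sets that are `α`-safe for at least one vertex is at most
`2^l · n · C(α,w)`. -/
theorem alpha_safe_count (n w α l : ℕ) (hw : 1 ≤ w) (hwα : w ≤ α) (hαn : α ≤ n)
    (hl : 1 ≤ l) (g : Finset (Fin n) → Fin (2 ^ l)) :
    (∀ (m : Fin (2 ^ l)) (k : Fin n),
      ((univ.filter (fun S : Finset (Fin n) => S.card = w ∧ g S = m ∧ k ∉ S ∧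
        ((univ.filter (fun U : Finset (Fin n) =>
          U.card = w ∧ g U = m ∧ k ∉ U)).biUnion id).card ≤ α)).card ≤ α.choose w))
    ∧
    ((univ.filter (fun S : Finset (Fin n) => S.card = w ∧ ∃ k : Fin n, k ∉ S ∧
        ((univ.filter (fun U : Finset (Fin n) =>
          U.card = w ∧ g U = g S ∧ k ∉ U)).biUnion id).card ≤ α)).card
      ≤ 2 ^ l * n * α.choose w) := by
  have key : ∀ (m : Fin (2 ^ l)) (k : Fin n),
      ((univ.filter (fun S : Finset (Fin n) => S.card = w ∧ g S = m ∧ k ∉ S ∧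
        ((univ.filter (fun U : Finset (Fin n) =>
          U.card = w ∧ g U = m ∧ k ∉ U)).biUnion id).card ≤ α)).card ≤ α.choose w) := by
    intro m k
    set B := (univ.filter (fun U : Finset (Fin n) =>
      U.card = w ∧ g U = m ∧ k ∉ U)).biUnion id with hB
    by_cases hcond : B.card ≤ α
    · have hsub : (univ.filter (fun S : Finset (Fin n) => S.card = w ∧ g S = m ∧ k ∉ S ∧
          B.card ≤ α)) ⊆ B.powersetCard w := by
        intro S hS
        simp only [mem_filter, mem_univ, true_and] at hS
        obtain ⟨h1, h2, h3, -⟩ := hS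
        rw [mem_powersetCard]
        refine ⟨fun x hx => ?_, h1⟩
        exact mem_biUnion.2 ⟨S, mem_filter.2 ⟨mem_univ _, h1, h2, h3⟩, hx⟩
      calc (univ.filter (fun S : Finset (Fin n) => S.card = w ∧ g S = m ∧ k ∉ S ∧
            B.card ≤ α)).card
          ≤ (B.powersetCard w).card := card_le_card hsub
        _ = B.card.choose w := card_powersetCard w B
        _ ≤ α.choose w := Nat.choose_le_choose w hcond
    · have : (univ.filter (fun S : Finset (Fin n) => S.card = w ∧ g S = m ∧ k ∉ S ∧
          B.card ≤ α)) = ∅ := by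
        apply filter_false_of_mem
        intro S _ h
        exact hcond h.2.2.2
      simp [this]
  refine ⟨key, ?_⟩
  have hsub : (univ.filter (fun S : Finset (Fin n) => S.card = w ∧ ∃ k : Fin n, k ∉ S ∧
        ((univ.filter (fun U : Finset (Fin n) =>
          U.card = w ∧ g U = g S ∧ k ∉ U)).biUnion id).card ≤ α))
      ⊆ (univ : Finset (Fin (2 ^ l) × Fin n)).biUnion (fun p =>
        univ.filter (fun S : Finset (Fin n) => S.card = w ∧ g S = p.1 ∧ p.2 ∉ S ∧
        ((univ.filter (fun U : Finset (Fin n) =>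
          U.card = w ∧ g U = p.1 ∧ p.2 ∉ U)).biUnion id).card ≤ α)) := by
    intro S hS
    simp only [mem_filter, mem_univ, true_and] at hS
    obtain ⟨h1, k, h2, h3⟩ := hS
    exact mem_biUnion.2 ⟨(g S, k), mem_univ _,
      mem_filter.2 ⟨mem_univ _, h1, rfl, h2, h3⟩⟩
  calc (univ.filter (fun S : Finset (Fin n) => S.card = w ∧ ∃ k : Fin n, k ∉ S ∧
        ((univ.filter (fun U : Finset (Fin n) =>
          U.card = w ∧ g U = g S ∧ k ∉ U)).biUnion id).card ≤ α)).card
      ≤ ((univ : Finset (Fin (2 ^ l) × Fin n)).biUnion (fun p =>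
        univ.filter (fun S : Finset (Fin n) => S.card = w ∧ g S = p.1 ∧ p.2 ∉ S ∧
        ((univ.filter (fun U : Finset (Fin n) =>
          U.card = w ∧ g U = p.1 ∧ p.2 ∉ U)).biUnion id).card ≤ α))).card :=
        card_le_card hsub
    _ ≤ ∑ p : Fin (2 ^ l) × Fin n,
        (univ.filter (fun S : Finset (Fin n) => S.card = w ∧ g S = p.1 ∧ p.2 ∉ S ∧
        ((univ.filter (fun U : Finset (Fin n) =>
          U.card = w ∧ g U = p.1 ∧ p.2 ∉ U)).biUnion id).card ≤ α)).card :=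
        card_biUnion_le
    _ ≤ ∑ _p : Fin (2 ^ l) × Fin n, α.choose w :=
        Finset.sum_le_sum (fun p _ => key p.1 p.2)
    _ = 2 ^ l * n * α.choose w := by
        simp [Finset.sum_const, Fintype.card_prod, mul_assoc]
end

section
/- Suppose valuations v₁,...,vₙ over subsets of a set M of items, prices p : M → [0,1], and an allocation where each allocated player i receives an item jᵢ satisfying vᵢ(jᵢ) - p(jᵢ) ≥ vᵢ(oᵢ) - p(oᵢ) - δ for his optimal item oᵢ, and each satisfied-but-unallocated player i satisfies 0 ≥ vᵢ(oᵢ) - p(oᵢ). If unallocated items have price 0 and at least (1-δ)·n' of the n' players matched in the optimum are satisfied, then the number of players allocated items with value 1 is at least (1-2δ)·n'. -/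
open Finset in
open Classical in
/-- First-welfare-theorem style argument with `δ`-approximate demands: if prices lie in
`[0,1]`, unallocated items have price `0`, every satisfied allocated player gets an item
that is `δ`-approximately his most profitable (compared with his optimal item `o i`),
every satisfied unallocated player has nonpositive profit from his optimal item, and at
least `(1-δ)·n'` of the `n'` optimally matched players are satisfied, then the number of
players allocated items of value `1` is at least `(1-2δ)·n'`. -/
theorem approx_first_welfare {ι M : Type} [Fintype ι] [Fintype M]
    (v : ι → M → ℝ) (p : M → ℝ) (δ : ℝ) (hδ0 : 0 ≤ δ)
    (a : ι → Option M) (o : ι → Option M) (N' S : Finset ι)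
    (h01 : ∀ i j, v i j = 0 ∨ v i j = 1)
    (hp0 : ∀ j, 0 ≤ p j) (hp1 : ∀ j, p j ≤ 1)
    -- optimal matching of the players in `N'`
    (hov : ∀ i ∈ N', ∃ j, o i = some j ∧ v i j = 1)
    (honone : ∀ i ∉ N', o i = none)
    (hoinj : ∀ i ∈ N', ∀ i' ∈ N', ∀ j, o i = some j → o i' = some j → i = i')
    -- the allocation is a matching, allocated items have value 1, allocated players are satisfied
    (hainj : ∀ i i' j, a i = some j → a i' = some j → i = i')
    (hav : ∀ i j, a i = some j → v i j = 1)
    (haS : ∀ i, a i ≠ none → i ∈ S)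
    (hbound : (univ.filter (fun i => a i ≠ none)).card ≤ N'.card)
    -- unallocated items have price 0
    (hfree : ∀ j, (∀ i, a i ≠ some j) → p j = 0)
    -- satisfied allocated players approximately maximize profit
    (halloc : ∀ i ∈ S, ∀ j, a i = some j →
      (o i).elim 0 (fun j' => v i j' - p j') - δ ≤ v i j - p j)
    -- satisfied unallocated players have nonpositive optimal profit
    (hunalloc : ∀ i ∈ S, a i = none → (o i).elim 0 (fun j' => v i j' - p j') ≤ 0)
    -- at least (1-δ)n' of the optimally matched players are satisfied
    (hsat : (1 - δ) * (N'.card : ℝ) ≤ ((N' ∩ S).card : ℝ)) :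
    (1 - 2 * δ) * (N'.card : ℝ)
      ≤ ((univ.filter (fun i => ∃ j, a i = some j ∧ v i j = 1)).card : ℝ) := by
  classical
  set A : Finset ι := univ.filter (fun i => a i ≠ none) with hA
  set T : Finset ι := N' ∩ S with hTdef
  -- the goal's set is exactly A
  have hsetA : (univ.filter (fun i => ∃ j, a i = some j ∧ v i j = 1)) = A := by
    ext i
    simp only [hA, mem_filter, mem_univ, true_and]
    constructor
    · rintro ⟨j, hj, -⟩; simp [hj]
    · intro h
      obtain ⟨j, hj⟩ := Option.ne_none_iff_exists'.mp h
      exact ⟨j, hj, hav i j hj⟩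
  rw [hsetA]
  set P : Option M → ℝ := fun j => j.elim 0 p with hP
  have hP0 : ∀ j, 0 ≤ P j := by rintro (_ | j) <;> simp [hP, hp0]
  have hP1 : ∀ j, P j ≤ 1 := by rintro (_ | j) <;> simp [hP, hp1]
  set f : ι → ℝ := fun i => (a i).elim 0 (fun j => 1 - p j) with hf
  have hf0 : ∀ i, 0 ≤ f i := by
    intro i
    cases h : a i with
    | none => simp [hf, h]
    | some j => simp [hf, h]; linarith [hp1 j]
  -- pointwise inequality on satisfied matched players
  have hpt : ∀ i ∈ T, 1 - P (o i) - δ ≤ f i := by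
    intro i hi
    rw [hTdef, mem_inter] at hi
    obtain ⟨hiN, hiS⟩ := hi
    obtain ⟨j', hoj, hvj⟩ := hov i hiN
    cases h : a i with
    | none =>
      have h0 := hunalloc i hiS h
      rw [hoj] at h0
      simp only [Option.elim_some] at h0
      simp only [hf, h, Option.elim_none, hP, hoj, Option.elim_some]
      linarith
    | some j =>
      have h0 := halloc i hiS j h
      rw [hoj] at h0
      simp only [Option.elim_some] at h0
      have hv1 := hav i j h
      simp only [hf, h, Option.elim_some, hP, hoj]
      linarith
  -- o is injective on T, a is injective on A
  have hoinjT : Set.InjOn o (T : Set ι) := by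
    intro i hi i' hi' h
    simp only [hTdef, coe_inter, Set.mem_inter_iff, mem_coe] at hi hi'
    obtain ⟨j, hj, -⟩ := hov i hi.1
    exact hoinj i hi.1 i' hi'.1 j hj (h ▸ hj)
  have hainjA : Set.InjOn a (A : Set ι) := by
    intro i hi i' hi' h
    simp only [hA, coe_filter, Set.mem_setOf_eq, mem_univ, true_and] at hi hi'
    obtain ⟨j, hj⟩ := Option.ne_none_iff_exists'.mp hi
    exact hainj i i' j hj (h ▸ hj)
  -- sum over T of f bounded by sum over A of f
  have hsum1 : ∑ i ∈ T, f i ≤ ∑ i ∈ A, f i := by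
    calc ∑ i ∈ T, f i ≤ ∑ i ∈ univ, f i :=
          Finset.sum_le_sum_of_subset_of_nonneg (subset_univ T) (fun i _ _ => hf0 i)
      _ = ∑ i ∈ A, f i := by
          refine (Finset.sum_subset (subset_univ A) ?_).symm
          intro i _ hiA
          have : a i = none := by
            by_contra h
            exact hiA (by simp [hA, h])
          simp [hf, this]
  -- rewrite sum over A of f
  have hsum2 : ∑ i ∈ A, f i = (A.card : ℝ) - ∑ i ∈ A, P (a i) := by
    have : ∀ i ∈ A, f i = 1 - P (a i) := by
      intro i hi
      simp only [hA, mem_filter] at hi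
      obtain ⟨j, hj⟩ := Option.ne_none_iff_exists'.mp hi.2
      simp [hf, hP, hj]
    rw [Finset.sum_congr rfl this, Finset.sum_sub_distrib, Finset.sum_const,
      nsmul_eq_mul, mul_one]
  -- sum of optimal prices bounded by sum of allocated prices
  have hsum3 : ∑ i ∈ T, P (o i) ≤ ∑ i ∈ A, P (a i) := by
    rw [← Finset.sum_image (fun i hi i' hi' h => hoinjT hi hi' h),
        ← Finset.sum_image (fun i hi i' hi' h => hainjA hi hi' h)]
    have hzero : ∑ j ∈ T.image o, P j = ∑ j ∈ (T.image o) ∩ (A.image a), P j := by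
      refine (Finset.sum_subset (Finset.inter_subset_left) ?_).symm
      intro j hj hj'
      obtain ⟨i, hiT, hio⟩ := Finset.mem_image.mp hj
      have hiN : i ∈ N' := (mem_inter.mp (hTdef ▸ hiT)).1
      obtain ⟨m, hm, -⟩ := hov i hiN
      have hmj : j = some m := by rw [← hio, hm]
      have hnm : ∀ i', a i' ≠ some m := by
        intro i' hi'
        apply hj'
        refine Finset.mem_inter.mpr ⟨hj, Finset.mem_image.mpr ⟨i', ?_, hmj ▸ hi'⟩⟩
        simp [hA, hi']
      rw [hmj]
      simp [hP, hfree m hnm]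
    rw [hzero]
    exact Finset.sum_le_sum_of_subset_of_nonneg (Finset.inter_subset_right)
      (fun j _ _ => hP0 j)
  -- sum over T of pointwise bound
  have hsum4 : (1 - δ) * (T.card : ℝ) - ∑ i ∈ T, P (o i) ≤ ∑ i ∈ T, f i := by
    have := Finset.sum_le_sum hpt
    have heq : ∑ i ∈ T, (1 - P (o i) - δ) =
        (1 - δ) * (T.card : ℝ) - ∑ i ∈ T, P (o i) := by
      rw [Finset.sum_sub_distrib, Finset.sum_sub_distrib, Finset.sum_const,
        Finset.sum_const, nsmul_eq_mul, nsmul_eq_mul, mul_one]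
      ring
    linarith [heq ▸ this]
  have hkey : (1 - δ) * (T.card : ℝ) ≤ (A.card : ℝ) := by linarith
  have hTcast : (1 - δ) * (N'.card : ℝ) ≤ (T.card : ℝ) := hsat
  have hA0 : (0 : ℝ) ≤ (A.card : ℝ) := Nat.cast_nonneg _
  have hN0 : (0 : ℝ) ≤ (N'.card : ℝ) := Nat.cast_nonneg _
  have hT0 : (0 : ℝ) ≤ (T.card : ℝ) := Nat.cast_nonneg _
  by_cases hd : δ ≤ 1
  · have h1 : (1 - δ) * ((1 - δ) * (N'.card : ℝ)) ≤ (1 - δ) * (T.card : ℝ) :=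
      mul_le_mul_of_nonneg_left hTcast (by linarith)
    nlinarith [sq_nonneg δ, mul_nonneg (mul_nonneg hδ0 hδ0) hN0]
  · have : (1 - 2 * δ) * (N'.card : ℝ) ≤ 0 :=
      mul_nonpos_of_nonpos_of_nonneg (by linarith) hN0
    linarith
end

section
/- For every subadditive valuation v on subsets of an m-element set, there exists an XOS valuation u such that for every set S, v(S) ≥ u(S) ≥ v(S)/O(log m). Consequently, an α-approximation algorithm for welfare maximization with XOS bidders yields an O(α · log m)-approximation for subadditive bidders. -/
open Finset

/-- A valuation is subadditive if it is normalized, monotone and subadditive. -/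
def IsSubadditiveVal {m : ℕ} (v : Finset (Fin m) → ℝ) : Prop :=
  v ∅ = 0 ∧ (∀ S T, S ⊆ T → v S ≤ v T) ∧ ∀ S T, v (S ∪ T) ≤ v S + v T

/-- A valuation is XOS if it is a pointwise maximum of finitely many additive valuations
with nonnegative item values. -/
def IsXOSVal {m : ℕ} (u : Finset (Fin m) → ℝ) : Prop :=
  ∃ (t : ℕ) (a : Fin (t + 1) → Fin m → ℝ),
    (∀ r j, 0 ≤ a r j) ∧
    ∀ S, u S = univ.sup' univ_nonempty (fun r : Fin (t + 1) => ∑ j ∈ S, a r j)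

/-! Dobzinski's construction: for each set `S`, peel off greedily a nonempty subset of minimal
density `v T / #T` and give each of its items the price `v T / #T`, then recurse on the rest.
Subadditivity makes these prices cover `v S`, and minimality of the densities caps the price of
any `T ⊆ S` at `H_{#T} · v T`, `H_k` the harmonic number. Scaling the prices by `1 / H_m` gives
additive valuations below `v`, one per set, and their maximum is the XOS valuation; finally
`H_m ≤ 1 + log m ≤ 3 log m` for `m ≥ 2`. -/

lemma sub_div_le_harmonic_sub_harmonic {k' k : ℕ} (h : k' ≤ k) :
    ((k : ℚ) - k') / k ≤ harmonic k - harmonic k' := by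
  rw [harmonic, harmonic, ← Finset.sum_Ico_eq_sub _ h, div_eq_mul_inv, ← Nat.cast_sub h,
    ← Nat.card_Ico, ← nsmul_eq_mul, ← Finset.sum_const]
  refine Finset.sum_le_sum fun i hi => inv_anti₀ (by positivity) ?_
  exact_mod_cast (Finset.mem_Ico.mp hi).2

lemma harmonic_mono : Monotone harmonic := fun _ k h =>
  sub_nonneg.mp <| (div_nonneg (sub_nonneg.mpr (Nat.cast_le.mpr h)) k.cast_nonneg).trans
    (sub_div_le_harmonic_sub_harmonic h)

lemma harmonic_nonneg (k : ℕ) : 0 ≤ harmonic k :=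
  harmonic_zero ▸ harmonic_mono k.zero_le

lemma harmonic_le_three_mul_log {m : ℕ} (hm : 2 ≤ m) : (harmonic m : ℝ) ≤ 3 * Real.log m := by
  have hlog : Real.log 2 ≤ Real.log m := Real.log_le_log two_pos (by exact_mod_cast hm)
  linarith [harmonic_le_one_add_log m, Real.log_two_gt_d9]

/-- The inequality behind one peeling step, with `k = #T`, `k' = #(T \ T₁)`, `x = v T`. -/
lemma sub_mul_add_le_harmonic_mul {k' k : ℕ} (hk : k' ≤ k) {d x y : ℝ}
    (hx : 0 ≤ x) (hd : d ≤ x / k) (hy : y ≤ harmonic k' * x) :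
    ((k : ℝ) - k') * d + y ≤ harmonic k * x := by
  have hgap := (Rat.cast_le (K := ℝ)).mpr (sub_div_le_harmonic_sub_harmonic hk)
  push_cast at hgap
  have hkk' : (0 : ℝ) ≤ k - k' := sub_nonneg.mpr (by exact_mod_cast hk)
  calc ((k : ℝ) - k') * d + y ≤ ((k : ℝ) - k') / k * x + harmonic k' * x := by
        rw [div_mul_eq_mul_div, mul_div_assoc]; gcongr
    _ ≤ (harmonic k - harmonic k') * x + harmonic k' * x := by gcongr
    _ = harmonic k * x := by ring

variable {α : Type*}

structure IsHarmonicPricing (v : Finset α → ℝ) (S : Finset α) (p : α → ℝ) : Prop where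
  nonneg : ∀ j, 0 ≤ p j
  eq_zero_of_notMem : ∀ j ∉ S, p j = 0
  le_sum : v S ≤ ∑ j ∈ S, p j
  sum_le : ∀ T ⊆ S, ∑ j ∈ T, p j ≤ harmonic #T * v T

lemma isHarmonicPricing_empty {v : Finset α → ℝ} (hv0 : v ∅ = 0) :
    IsHarmonicPricing v ∅ 0 where
  nonneg _ := le_rfl
  eq_zero_of_notMem _ _ := rfl
  le_sum := by simp [hv0]
  sum_le T hT := by simp [Finset.subset_empty.mp hT, hv0]

lemma exists_min_density (v : Finset α → ℝ) {S : Finset α} (hS : S.Nonempty) :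
    ∃ T₁ ⊆ S, T₁.Nonempty ∧ ∀ T ⊆ S, T.Nonempty → v T₁ / #T₁ ≤ v T / #T := by
  obtain ⟨T₁, hT₁, hmin⟩ := (S.powerset.filter (·.Nonempty)).exists_min_image
    (fun T => v T / #T) ⟨S, by simpa using hS⟩
  simp only [Finset.mem_filter, Finset.mem_powerset] at hT₁ hmin
  exact ⟨T₁, hT₁.1, hT₁.2, fun T hTS hT => hmin T ⟨hTS, hT⟩⟩

variable [DecidableEq α]

section PeelingStep

variable {v : Finset α → ℝ} {S T₁ : Finset α} {p : α → ℝ}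

lemma IsHarmonicPricing.sum_piecewise_le (hv0 : v ∅ = 0) (hmono : Monotone v)
    (hmin : ∀ T ⊆ S, T.Nonempty → v T₁ / #T₁ ≤ v T / #T) (hp : IsHarmonicPricing v (S \ T₁) p)
    {T : Finset α} (hTS : T ⊆ S) :
    ∑ j ∈ T, T₁.piecewise (fun _ => v T₁ / #T₁) p j ≤ harmonic #T * v T := by
  rcases T.eq_empty_or_nonempty with rfl | hT
  · simp [hv0]
  have hcard : (#(T ∩ T₁) : ℝ) = #T - #(T \ T₁) := by
    rw [eq_sub_iff_add_eq]; exact_mod_cast Finset.card_inter_add_card_sdiff T T₁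
  have hrest : ∑ j ∈ T \ T₁, p j ≤ harmonic #(T \ T₁) * v T :=
    (hp.sum_le _ (Finset.sdiff_subset_sdiff hTS le_rfl)).trans <|
      mul_le_mul_of_nonneg_left (hmono Finset.sdiff_subset) (by exact_mod_cast harmonic_nonneg _)
  rw [Finset.sum_piecewise, Finset.sum_const, nsmul_eq_mul, hcard]
  exact sub_mul_add_le_harmonic_mul (Finset.card_le_card Finset.sdiff_subset)
    (hv0 ▸ hmono (Finset.empty_subset T)) (hmin T hTS hT) hrest

lemma IsHarmonicPricing.piecewise (hv0 : v ∅ = 0) (hmono : Monotone v)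
    (hsub : ∀ S T, v (S ∪ T) ≤ v S + v T) (hT₁S : T₁ ⊆ S) (hT₁ : T₁.Nonempty)
    (hmin : ∀ T ⊆ S, T.Nonempty → v T₁ / #T₁ ≤ v T / #T) (hp : IsHarmonicPricing v (S \ T₁) p) :
    IsHarmonicPricing v S (T₁.piecewise (fun _ => v T₁ / #T₁) p) where
  nonneg j := by
    by_cases hj : j ∈ T₁
    · rw [Finset.piecewise_eq_of_mem _ _ _ hj]
      exact div_nonneg (hv0 ▸ hmono (Finset.empty_subset T₁)) (Nat.cast_nonneg _)
    · rw [Finset.piecewise_eq_of_notMem _ _ _ hj]; exact hp.nonneg j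
  eq_zero_of_notMem j hj := by
    rw [Finset.piecewise_eq_of_notMem _ _ _ fun h => hj (hT₁S h)]
    exact hp.eq_zero_of_notMem j fun h => hj (Finset.sdiff_subset h)
  le_sum := by
    have hdens : (#T₁ : ℝ) * (v T₁ / #T₁) = v T₁ :=
      mul_div_cancel₀ _ (by exact_mod_cast hT₁.card_pos.ne')
    rw [Finset.sum_piecewise, Finset.inter_eq_right.mpr hT₁S, Finset.sum_const, nsmul_eq_mul,
      hdens]
    calc v S = v (T₁ ∪ S \ T₁) := by rw [Finset.union_sdiff_of_subset hT₁S]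
      _ ≤ v T₁ + v (S \ T₁) := hsub _ _
      _ ≤ v T₁ + ∑ j ∈ S \ T₁, p j := add_le_add_right hp.le_sum _
  sum_le _ hTS := hp.sum_piecewise_le hv0 hmono hmin hTS

end PeelingStep

lemma exists_isHarmonicPricing {v : Finset α → ℝ} (hv0 : v ∅ = 0) (hmono : Monotone v)
    (hsub : ∀ S T, v (S ∪ T) ≤ v S + v T) (S : Finset α) : ∃ p, IsHarmonicPricing v S p := by
  induction S using Finset.strongInduction with
  | H S ih =>
    rcases S.eq_empty_or_nonempty with rfl | hS
    · exact ⟨0, isHarmonicPricing_empty hv0⟩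
    obtain ⟨T₁, hT₁S, hT₁, hmin⟩ := exists_min_density v hS
    obtain ⟨p, hp⟩ := ih (S \ T₁) (Finset.sdiff_ssubset hT₁S hT₁)
    exact ⟨_, hp.piecewise hv0 hmono hsub hT₁S hT₁ hmin⟩

lemma IsHarmonicPricing.sum_le_harmonic_card [Fintype α] {v : Finset α → ℝ} {S : Finset α}
    {p : α → ℝ} (hp : IsHarmonicPricing v S p) (hv0 : v ∅ = 0) (hmono : Monotone v)
    (R : Finset α) : ∑ j ∈ R, p j ≤ harmonic (Fintype.card α) * v R := by
  calc ∑ j ∈ R, p j = ∑ j ∈ R ∩ S, p j :=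
        (Finset.sum_subset Finset.inter_subset_left fun j hjR hj =>
          hp.eq_zero_of_notMem j fun hjS => hj (Finset.mem_inter.mpr ⟨hjR, hjS⟩)).symm
    _ ≤ harmonic #(R ∩ S) * v (R ∩ S) := hp.sum_le _ Finset.inter_subset_right
    _ ≤ harmonic (Fintype.card α) * v R := by
        refine mul_le_mul ?_ (hmono Finset.inter_subset_left)
          (hv0 ▸ hmono (Finset.empty_subset _)) (by exact_mod_cast harmonic_nonneg _)
        exact_mod_cast harmonic_mono (Finset.card_le_univ _)

lemma isXOSVal_sup' {m : ℕ} {ι : Type*} [Fintype ι] [Nonempty ι] (a : ι → Fin m → ℝ)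
    (ha : ∀ r j, 0 ≤ a r j) :
    IsXOSVal fun S => univ.sup' univ_nonempty fun r => ∑ j ∈ S, a r j := by
  have hcard : Fintype.card ι - 1 + 1 = Fintype.card ι := Nat.sub_add_cancel Fintype.card_pos
  let e : Fin (Fintype.card ι - 1 + 1) ≃ ι := (finCongr hcard).trans (Fintype.equivFin ι).symm
  refine ⟨_, fun r => a (e r), fun r j => ha _ j, fun S => le_antisymm ?_ ?_⟩
  · exact Finset.sup'_le _ _ fun r _ =>
      Finset.le_sup'_of_le _ (Finset.mem_univ (e.symm r)) (by simp)
  · exact Finset.sup'_le _ _ fun r _ =>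
      Finset.le_sup' (fun r => ∑ j ∈ S, a r j) (Finset.mem_univ _)

lemma IsXOSVal.nonneg {m : ℕ} {u : Finset (Fin m) → ℝ} (hu : IsXOSVal u) (S : Finset (Fin m)) :
    0 ≤ u S := by
  obtain ⟨t, a, ha, hu⟩ := hu
  rw [hu]
  exact (Finset.sum_nonneg fun j _ => ha 0 j).trans
    (Finset.le_sup' (fun r => ∑ j ∈ S, a r j) (Finset.mem_univ 0))

lemma exists_isXOSVal_le_le_harmonic_mul {m : ℕ} (hm : m ≠ 0) {v : Finset (Fin m) → ℝ}
    (hv : IsSubadditiveVal v) :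
    ∃ u, IsXOSVal u ∧ ∀ S, u S ≤ v S ∧ v S ≤ harmonic m * u S := by
  obtain ⟨hv0, hsubset, hsub⟩ := hv
  have hmono : Monotone v := fun S T h => hsubset S T h
  choose p hp using exists_isHarmonicPricing hv0 hmono hsub
  have hH : (0 : ℝ) < harmonic m := by exact_mod_cast harmonic_pos hm
  refine ⟨_, isXOSVal_sup' (fun S j => p S j / harmonic m)
    (fun S j => div_nonneg ((hp S).nonneg j) hH.le), fun S => ⟨?_, ?_⟩⟩
  · refine Finset.sup'_le _ _ fun R _ => ?_
    rw [← Finset.sum_div, div_le_iff₀' hH]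
    simpa using (hp R).sum_le_harmonic_card hv0 hmono S
  · rw [← div_le_iff₀' hH]
    refine Finset.le_sup'_of_le _ (Finset.mem_univ S) ?_
    rw [← Finset.sum_div]
    exact div_le_div_of_nonneg_right (hp S).le_sum hH.le

lemma exists_isXOSVal_le_le_log_mul {m : ℕ} (hm : 2 ≤ m) {v : Finset (Fin m) → ℝ}
    (hv : IsSubadditiveVal v) :
    ∃ u, IsXOSVal u ∧ ∀ S, u S ≤ v S ∧ v S ≤ 3 * Real.log m * u S := by
  obtain ⟨u, hu, hvu⟩ := exists_isXOSVal_le_le_harmonic_mul (by omega) hv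
  refine ⟨u, hu, fun S => ⟨(hvu S).1, (hvu S).2.trans ?_⟩⟩
  exact mul_le_mul_of_nonneg_right (harmonic_le_three_mul_log hm) (hu.nonneg S)

lemma sum_le_mul_sum_of_approx {ι β : Type*} [Fintype ι] {u v : ι → β → ℝ} {c α : ℝ}
    (hc : 0 ≤ c) (hα : 0 ≤ α) (huv : ∀ i S, u i S ≤ v i S) (hvu : ∀ i S, v i S ≤ c * u i S)
    {A O : ι → β} (hOA : ∑ i, u i (O i) ≤ α * ∑ i, u i (A i)) :
    ∑ i, v i (O i) ≤ c * α * ∑ i, v i (A i) :=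
  calc ∑ i, v i (O i) ≤ c * ∑ i, u i (O i) := by
        rw [Finset.mul_sum]; exact Finset.sum_le_sum fun i _ => hvu i _
    _ ≤ c * (α * ∑ i, u i (A i)) := mul_le_mul_of_nonneg_left hOA hc
    _ ≤ c * α * ∑ i, v i (A i) := by
        rw [← mul_assoc]
        exact mul_le_mul_of_nonneg_left (Finset.sum_le_sum fun i _ => huv i _)
          (mul_nonneg hc hα)

/-- Every subadditive valuation on `m ≥ 2` items is `O(log m)`-approximated from below by
an XOS valuation; consequently, any allocation whose XOS-proxy welfare is within a factor
`α` of optimal has subadditive welfare within a factor `O(α · log m)` of optimal. -/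
theorem subadditive_xos_approx :
    ∃ C : ℝ, 0 < C ∧ ∀ m : ℕ, 2 ≤ m →
      (∀ v : Finset (Fin m) → ℝ, IsSubadditiveVal v →
        ∃ u : Finset (Fin m) → ℝ, IsXOSVal u ∧
          ∀ S, u S ≤ v S ∧ v S ≤ C * Real.log m * u S) ∧
      (∀ (α : ℝ), 1 ≤ α → ∀ (n : ℕ) (v : Fin n → Finset (Fin m) → ℝ),
        (∀ i, IsSubadditiveVal (v i)) →
        ∃ u : Fin n → Finset (Fin m) → ℝ, (∀ i, IsXOSVal (u i)) ∧
          ∀ A O : Fin n → Finset (Fin m),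
            (∑ i, u i (O i)) ≤ α * ∑ i, u i (A i) →
            (∑ i, v i (O i)) ≤ C * α * Real.log m * ∑ i, v i (A i)) := by
  refine ⟨3, three_pos, fun m hm => ⟨fun v hv => exists_isXOSVal_le_le_log_mul hm hv, ?_⟩⟩
  intro α hα n v hv
  choose u hu hvu using fun i => exists_isXOSVal_le_le_log_mul hm (hv i)
  have hlog : 0 ≤ 3 * Real.log m := by positivity
  refine ⟨u, hu, fun A O hOA => ?_⟩
  exact (sum_le_mul_sum_of_approx hlog (by linarith) (fun i S => (hvu i S).1)
    (fun i S => (hvu i S).2) hOA).trans_eq (by ring)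
end

section
/- Let (O₁,...,Oₙ) be an allocation with values v_i(O_i) = Σᵢ w_i, and put player i in bin r (r a power of 2, 1 ≤ r ≤ m) if r ≤ |O_i| < 2r. Then there exists a bin t such that the players in bin t, each truncated to a sub-bundle of size exactly t, achieve total welfare at least Σᵢ v_i(O_i) / (4 log₂ m), assuming v_i(A) ≥ |A| for any subset A ⊆ O_i of a bundle with v_i(O_i) = |O_i| (binary XOS monotone restriction). -/
/-!
Group the players by `⌊log₂ |O_i|⌋`: there are at most `log₂ m + 1 ≤ 2 log₂ m` dyadic bins, so by
pigeonhole one of them carries at least a `1 / (2 log₂ m)` fraction of the welfare. Inside the bin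
of `t` every bundle has fewer than `2t` items, so cutting each one down to exactly `t` items loses
at most another factor `2`.
-/

open Finset

namespace Finset

variable {α : Type*}

noncomputable def truncate (t : ℕ) (A : Finset α) : Finset α :=
  if h : t ≤ #A then (exists_subset_card_eq h).choose else ∅

theorem truncate_subset (t : ℕ) (A : Finset α) : truncate t A ⊆ A := by
  unfold truncate
  split_ifs with h
  · exact (exists_subset_card_eq h).choose_spec.1
  · exact empty_subset A

theorem card_truncate {t : ℕ} {A : Finset α} (h : t ≤ #A) : #(truncate t A) = t := by
  rw [truncate, dif_pos h]
  exact (exists_subset_card_eq h).choose_spec.2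

theorem sum_card_le_two_mul_sum_card_truncate {ι : Type*} (S : Finset ι) (O : ι → Finset α)
    (t : ℕ) (hS : ∀ i ∈ S, t ≤ #(O i) ∧ #(O i) < 2 * t) :
    ∑ i ∈ S, #(O i) ≤ 2 * ∑ i ∈ S, #(truncate t (O i)) := by
  rw [mul_sum]
  refine sum_le_sum fun i hi => ?_
  rw [card_truncate (hS i hi).1]
  exact (hS i hi).2.le

end Finset

theorem Nat.log_two_eq_iff {c k : ℕ} (hc : c ≠ 0) :
    Nat.log 2 c = k ↔ 2 ^ k ≤ c ∧ c < 2 * 2 ^ k := by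
  rw [Nat.log_eq_iff (Or.inr ⟨one_lt_two, hc⟩), pow_succ', mul_comm]

theorem Real.natLog_add_one_le_two_mul_logb {m : ℕ} (hm : 2 ≤ m) :
    (Nat.log 2 m + 1 : ℝ) ≤ 2 * Real.logb 2 m := by
  have hone : (1 : ℝ) ≤ Nat.log 2 m := by
    exact_mod_cast Nat.le_log_of_pow_le one_lt_two (by simpa using hm)
  have hlogb : (Nat.log 2 m : ℝ) ≤ Real.logb 2 m := by exact_mod_cast Real.natLog_le_logb m 2
  linarith

theorem Finset.exists_dyadic_bin_sum_ge {ι : Type*} (s : Finset ι) (c : ι → ℕ) {m : ℕ}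
    (hc : ∀ i ∈ s, c i ≤ m) :
    ∃ k ≤ Nat.log 2 m, ∑ i ∈ s, (c i : ℝ) ≤
      (Nat.log 2 m + 1) * ∑ i ∈ s with 2 ^ k ≤ c i ∧ c i < 2 * 2 ^ k, (c i : ℝ) := by
  set K := Nat.log 2 m + 1
  have hmaps : ∀ i ∈ {i ∈ s | c i ≠ 0}, Nat.log 2 (c i) ∈ range K := fun i hi =>
    mem_range.2 (Nat.lt_succ_of_le (Nat.log_mono_right (hc i (mem_filter.1 hi).1)))
  have htotal : #(range K) • ((∑ i ∈ s, (c i : ℝ)) / K) ≤ ∑ i ∈ s with c i ≠ 0, (c i : ℝ) := by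
    rw [card_range, nsmul_eq_mul, mul_div_cancel₀ _ (by positivity)]
    exact (sum_filter_of_ne fun i _ h => by exact_mod_cast h).ge
  obtain ⟨k, hk, hfiber⟩ :=
    exists_le_sum_fiber_of_maps_to_of_nsmul_le_sum hmaps nonempty_range_add_one htotal
  have hbin : {i ∈ {i ∈ s | c i ≠ 0} | Nat.log 2 (c i) = k} =
      {i ∈ s | 2 ^ k ≤ c i ∧ c i < 2 * 2 ^ k} := by
    ext i
    simp only [mem_filter]
    constructor
    · rintro ⟨⟨his, hci⟩, hlog⟩
      exact ⟨his, (Nat.log_two_eq_iff hci).1 hlog⟩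
    · rintro ⟨his, hlo, hhi⟩
      have hci : c i ≠ 0 := ((Nat.two_pow_pos k).trans_le hlo).ne'
      exact ⟨⟨his, hci⟩, (Nat.log_two_eq_iff hci).2 ⟨hlo, hhi⟩⟩
  refine ⟨k, Nat.lt_succ_iff.1 (mem_range.1 hk), ?_⟩
  rw [hbin, div_le_iff₀' (by positivity)] at hfiber
  exact_mod_cast hfiber

open Classical in
/-- Binning by bundle size: for an allocation `(O₁,...,Oₙ)` of `m ≥ 2` items with binary
welfare `Σᵢ |O_i|`, there is a power of two `t ≤ m` and sub-bundles `B i ⊆ O i` of size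
exactly `t` for the players in bin `t` (those with `t ≤ |O_i| < 2t`), whose total welfare
is at least `Σᵢ |O_i| / (4 log₂ m)`. -/
theorem bin_by_size (m n : ℕ) (hm : 2 ≤ m) (O : Fin n → Finset (Fin m)) :
    ∃ (t : ℕ) (B : Fin n → Finset (Fin m)),
      (∃ s : ℕ, t = 2 ^ s) ∧ t ≤ m ∧
      (∀ i, B i ⊆ O i) ∧
      (∀ i, t ≤ (O i).card ∧ (O i).card < 2 * t → (B i).card = t) ∧
      (∑ i, ((O i).card : ℝ)) / (4 * Real.logb 2 m) ≤
        ∑ i ∈ univ.filter (fun i => t ≤ (O i).card ∧ (O i).card < 2 * t),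
          ((B i).card : ℝ) := by
  obtain ⟨k, hk, hwelfare⟩ :=
    exists_dyadic_bin_sum_ge univ (fun i => #(O i)) fun i _ => by simpa using card_le_univ (O i)
  refine ⟨2 ^ k, fun i => truncate (2 ^ k) (O i), ⟨k, rfl⟩, Nat.pow_le_of_le_log (by omega) hk,
    fun i => truncate_subset _ _, fun i hi => card_truncate hi.1, ?_⟩
  set S := univ.filter fun i => 2 ^ k ≤ #(O i) ∧ #(O i) < 2 * 2 ^ k
  have htrunc : ∑ i ∈ S, (#(O i) : ℝ) ≤ 2 * ∑ i ∈ S, (#(truncate (2 ^ k) (O i)) : ℝ) := by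
    exact_mod_cast sum_card_le_two_mul_sum_card_truncate S O _ fun i hi => (mem_filter.1 hi).2
  have hlog := Real.natLog_add_one_le_two_mul_logb hm
  have hlogpos : 0 < Real.logb 2 m := Real.logb_pos one_lt_two (by exact_mod_cast hm)
  rw [div_le_iff₀' (by positivity)]
  calc ∑ i, (#(O i) : ℝ)
      ≤ (Nat.log 2 m + 1) * ∑ i ∈ S, (#(O i) : ℝ) := by convert hwelfare
    _ ≤ (2 * Real.logb 2 m) * (2 * ∑ i ∈ S, (#(truncate (2 ^ k) (O i)) : ℝ)) :=
        mul_le_mul hlog htrunc (by positivity) (by positivity)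
    _ = 4 * Real.logb 2 m * ∑ i ∈ S, (#(truncate (2 ^ k) (O i)) : ℝ) := by ring
end

section
/- Given three allocation values W₁, W₂, W₃ and an optimum OPT with OPT/W₁ ≤ c·t, OPT/W₂ ≤ c·l, OPT/W₃ ≤ c·n'/l (c a polylog(m) factor), where n' ≤ m/t (players with disjoint size-t bundles), the maximum of W₁, W₂, W₃ satisfies OPT/max(W₁,W₂,W₃) ≤ c·m^{1/3}. -/
/-- Combining the three allocations: if `OPT/W₁ ≤ c·t`, `OPT/W₂ ≤ c·l` and
`OPT/W₃ ≤ c·n'/l` with `t, l ≥ 1` and `n' ≤ m/t`, then the best of the three allocations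
satisfies `OPT ≤ c·m^{1/3}·max(W₁,W₂,W₃)`. -/
theorem best_of_three (m t l n' OPT W₁ W₂ W₃ c : ℝ)
    (hm : 1 ≤ m) (ht : 1 ≤ t) (hl : 1 ≤ l) (hn' : 0 ≤ n') (hnt : n' ≤ m / t)
    (hOPT : 0 < OPT) (hW₁ : 0 < W₁) (hW₂ : 0 < W₂) (hW₃ : 0 < W₃) (hc : 0 < c)
    (h₁ : OPT ≤ c * t * W₁) (h₂ : OPT ≤ c * l * W₂) (h₃ : OPT ≤ c * (n' / l) * W₃) :
    OPT ≤ c * m ^ ((1 : ℝ) / 3) * max W₁ (max W₂ W₃) := by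
  set M := m ^ ((1 : ℝ) / 3) with hMdef
  have hmpos : (0 : ℝ) < m := by linarith
  have hMpos : 0 < M := Real.rpow_pos_of_pos hmpos _
  have hM3 : M * M * M = m := by
    have : M ^ (3 : ℕ) = m := by
      rw [hMdef, ← Real.rpow_natCast (m ^ ((1 : ℝ) / 3)) 3, ← Real.rpow_mul (le_of_lt hmpos)]
      norm_num
    nlinarith [this]
  have hmax₁ : W₁ ≤ max W₁ (max W₂ W₃) := le_max_left _ _
  have hmax₂ : W₂ ≤ max W₁ (max W₂ W₃) := le_trans (le_max_left _ _) (le_max_right _ _)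
  have hmax₃ : W₃ ≤ max W₁ (max W₂ W₃) := le_trans (le_max_right _ _) (le_max_right _ _)
  by_cases hT : t ≤ M
  · calc OPT ≤ c * t * W₁ := h₁
      _ ≤ c * M * max W₁ (max W₂ W₃) := by
          apply mul_le_mul (by nlinarith) hmax₁ (le_of_lt hW₁) (by positivity)
  by_cases hL : l ≤ M
  · calc OPT ≤ c * l * W₂ := h₂
      _ ≤ c * M * max W₁ (max W₂ W₃) := by
          apply mul_le_mul (by nlinarith) hmax₂ (le_of_lt hW₂) (by positivity)
  · push_neg at hT hL
    have hlpos : (0 : ℝ) < l := by linarith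
    have htpos : (0 : ℝ) < t := by linarith
    have hx : n' * t ≤ m := by
      have := (div_le_div_iff₀ htpos htpos).mp (le_refl (m / t))
      calc n' * t ≤ (m / t) * t := by nlinarith
        _ = m := by field_simp
    have hkey : n' / l ≤ M := by
      rw [div_le_iff₀ hlpos]
      nlinarith [mul_pos hMpos hMpos, mul_nonneg hn' (le_of_lt hMpos)]
    calc OPT ≤ c * (n' / l) * W₃ := h₃
      _ ≤ c * M * max W₁ (max W₂ W₃) := by
          apply mul_le_mul (by nlinarith) hmax₃ (le_of_lt hW₃) (by positivity)
end

section
/- Consider the k-round subadditive auction process on m items where in each round an unallocated player's candidate item set shrinks: U_{r+1,i} ⊆ U_{r,i} and if player i is unallocated in round r then m^{1/(k+1)} · |U_{r+1,i}| ≤ |⋃_{S ∈ 𝒮_{r,i}} S| ≤ |U_{r,i}|. Then for every player unallocated after all k rounds, either |U_{k+1,i}| ≤ m^{1/(k+1)}, and if moreover |U_{k+1,i}| > 0, the number of items allocated during the process is at least m^{k/(k+1)} - m^{1/(k+1)}. -/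
/-- The `k`-round subadditive auction shrinkage: `U_{r+1} ⊆ U_r`, the reported items
`B r = ⋃_{S ∈ 𝒮_r} S` satisfy `B r ⊆ U r` and, while the player stays unallocated,
`m^{1/(k+1)} · |U_{r+1}| ≤ |B r|`.  If the player is still unallocated after `k` rounds
then `|U_{k+1}| ≤ m^{1/(k+1)}`, and if moreover `|U_{k+1}| > 0` then the number `alloc`
of allocated items (which is at least `|B 1| - |U_{k+1}|`) is at least
`m^{k/(k+1)} - m^{1/(k+1)}`. -/
theorem subadditive_rounds_shrinkage (m k : ℕ) (hk : 0 < k)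
    (U B : ℕ → Finset (Fin m)) (alloc : ℕ)
    (hsub : ∀ r, 1 ≤ r → r ≤ k → U (r + 1) ⊆ U r)
    (hBU : ∀ r, 1 ≤ r → r ≤ k + 1 → B r ⊆ U r)
    (hshrink : ∀ r, 1 ≤ r → r ≤ k →
      (m : ℝ) ^ ((1 : ℝ) / (k + 1)) * ((U (r + 1)).card : ℝ) ≤ ((B r).card : ℝ))
    (halloc : ((B 1).card : ℝ) - ((U (k + 1)).card : ℝ) ≤ (alloc : ℝ)) :
    ((U (k + 1)).card : ℝ) ≤ (m : ℝ) ^ ((1 : ℝ) / (k + 1)) ∧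
      (0 < (U (k + 1)).card →
        (m : ℝ) ^ ((k : ℝ) / (k + 1)) - (m : ℝ) ^ ((1 : ℝ) / (k + 1)) ≤ (alloc : ℝ)) := by
  set c : ℝ := (m : ℝ) ^ ((1 : ℝ) / (k + 1)) with hc
  have hc0 : 0 ≤ c := Real.rpow_nonneg (by positivity) _
  -- handle m = 0 separately
  rcases Nat.eq_zero_or_pos m with hm | hm
  · subst hm
    have hU : (U (k + 1)).card = 0 := by
      simpa using Finset.card_le_card (Finset.subset_univ (U (k + 1)))
    constructor
    · simp [hU, hc0]
    · intro h; omega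
  have hmR : (0 : ℝ) < m := by exact_mod_cast hm
  have hck : c ^ (k + 1) = (m : ℝ) := by
    rw [hc, ← Real.rpow_natCast _ (k + 1), ← Real.rpow_mul (le_of_lt hmR)]
    push_cast
    rw [one_div, inv_mul_cancel₀ (by positivity), Real.rpow_one]
  have hckk : c ^ k = (m : ℝ) ^ ((k : ℝ) / (k + 1)) := by
    rw [hc, ← Real.rpow_natCast _ k, ← Real.rpow_mul (le_of_lt hmR)]
    ring_nf
  -- key downward chain
  have key : ∀ i, i ≤ k - 1 → c ^ (i + 1) * ((U (k + 1)).card : ℝ) ≤ ((B (k - i)).card : ℝ) := by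
    intro i
    induction i with
    | zero =>
      intro _
      simpa using hshrink k (by omega) le_rfl
    | succ i ih =>
      intro hi
      have hi' : i ≤ k - 1 := by omega
      have h1 : ((B (k - i)).card : ℝ) ≤ ((U (k - i)).card : ℝ) := by
        exact_mod_cast Finset.card_le_card (hBU (k - i) (by omega) (by omega))
      have h2 := hshrink (k - (i + 1)) (by omega) (by omega)
      have heq : k - (i + 1) + 1 = k - i := by omega
      rw [heq] at h2
      calc c ^ (i + 1 + 1) * ((U (k + 1)).card : ℝ)
          = c * (c ^ (i + 1) * ((U (k + 1)).card : ℝ)) := by ring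
        _ ≤ c * ((U (k - i)).card : ℝ) := by
            exact mul_le_mul_of_nonneg_left (le_trans (ih hi') h1) hc0
        _ ≤ ((B (k - (i + 1))).card : ℝ) := h2
  have hB1 : c ^ k * ((U (k + 1)).card : ℝ) ≤ ((B 1).card : ℝ) := by
    have := key (k - 1) le_rfl
    have h1 : k - 1 + 1 = k := by omega
    have h2 : k - (k - 1) = 1 := by omega
    rwa [h1, h2] at this
  have hU1 : ((B 1).card : ℝ) ≤ (m : ℝ) := by
    have : (B 1).card ≤ m := le_trans (Finset.card_le_card (Finset.subset_univ (B 1)))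
      (by simp)
    exact_mod_cast this
  have hckpos : 0 < c ^ k := by
    have : 0 < c := by
      rw [hc]; positivity
    positivity
  have part1 : ((U (k + 1)).card : ℝ) ≤ c := by
    have : c ^ k * ((U (k + 1)).card : ℝ) ≤ c ^ k * c := by
      calc c ^ k * ((U (k + 1)).card : ℝ) ≤ (m : ℝ) := le_trans hB1 hU1
        _ = c ^ k * c := by rw [← hck]; ring
    exact le_of_mul_le_mul_left this hckpos
  refine ⟨part1, fun hpos => ?_⟩
  have h1 : (1 : ℝ) ≤ ((U (k + 1)).card : ℝ) := by exact_mod_cast hpos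
  have : c ^ k ≤ ((B 1).card : ℝ) := by
    calc c ^ k = c ^ k * 1 := by ring
      _ ≤ c ^ k * ((U (k + 1)).card : ℝ) := by
          exact mul_le_mul_of_nonneg_left h1 (le_of_lt hckpos)
      _ ≤ ((B 1).card : ℝ) := hB1
  rw [← hckk]
  linarith
end

section
/- (Inductive maximality claim) In the k-round algorithm, for every round r and player i in N_r who is matched in the optimum with bundle O_i of size t: |O_i ∩ U_r| - |O_i ∩ (⋃_{S ∈ 𝒮_{r,i}} S)| ≤ r · t/(2k), where 𝒮_{r,i} is a maximal family of disjoint size-(t/(2k)) full-value bundles inside U_{r,i}, and U_{r+1} removes the items allocated in round r. -/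
/-- Inductive maximality claim for the `k`-round algorithm: if in every round at most
`t/(2k)` items of `O ∩ U_{r,i}` go unreported (maximality of the reported family `R r`),
where `U_{1,i} = U 1 ⊇ O` and `U_{r+1,i} = R r ∩ U (r+1)` with `U (r+1) ⊆ U r` (removing
allocated items), then for every round `r ≥ 1`,
`|O ∩ U_r| - |O ∩ R r| ≤ r · t/(2k)`. -/
theorem inductive_maximality {ι : Type} [DecidableEq ι] (k t : ℕ) (hk : 0 < k)
    (O : Finset ι) (U R Ui : ℕ → Finset ι)
    (hO : O ⊆ U 1) (hUi1 : Ui 1 = U 1)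
    (hUi : ∀ r, 1 ≤ r → Ui (r + 1) = R r ∩ U (r + 1))
    (hUsub : ∀ r, 1 ≤ r → U (r + 1) ⊆ U r)
    (hRsub : ∀ r, 1 ≤ r → R r ⊆ Ui r)
    (hmax : ∀ r, 1 ≤ r →
      ((O ∩ Ui r).card : ℝ) - ((O ∩ R r).card : ℝ) ≤ (t : ℝ) / (2 * k)) :
    ∀ r, 1 ≤ r →
      ((O ∩ U r).card : ℝ) - ((O ∩ R r).card : ℝ) ≤ (r : ℝ) * (t : ℝ) / (2 * k) := by
  have hUiU : ∀ r, 1 ≤ r → Ui r ⊆ U r := by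
    intro r hr
    match r, hr with
    | 1, _ => rw [hUi1]
    | (n+2), _ => rw [hUi (n+1) (by omega)]; exact Finset.inter_subset_right
  intro r hr
  induction r, hr using Nat.le_induction with
  | base =>
    have h := hmax 1 le_rfl
    rw [hUi1] at h
    simpa using h
  | succ n hn ih =>
    have h1 := hmax (n+1) (by omega)
    -- key natural-number inequality
    have hA : O ∩ U (n+1) ⊆ O ∩ U n := by
      exact Finset.inter_subset_inter (Finset.Subset.refl O) (hUsub n hn)
    have hRn : O ∩ R n ⊆ O ∩ U n :=
      Finset.inter_subset_inter (Finset.Subset.refl O) ((hRsub n hn).trans (hUiU n hn))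
    have e1 : O ∩ Ui (n+1) = (O ∩ U (n+1)) ∩ R n := by
      rw [hUi n hn]; ext x; simp [Finset.mem_inter]; tauto
    have e2 : O ∩ R n = (O ∩ U n) ∩ R n := by
      ext x; simp [Finset.mem_inter]
      intro hx hxR; exact (hUiU n hn) ((hRsub n hn) hxR)
    have hsd : ((O ∩ U (n+1)) \ R n).card ≤ ((O ∩ U n) \ R n).card :=
      Finset.card_le_card (Finset.sdiff_subset_sdiff hA (le_refl _))
    have c1 : ((O ∩ U (n+1)) \ R n).card
        = (O ∩ U (n+1)).card - ((O ∩ U (n+1)) ∩ R n).card := by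
      have := Finset.card_inter_add_card_sdiff (O ∩ U (n+1)) (R n)
      omega
    have c2 : ((O ∩ U n) \ R n).card
        = (O ∩ U n).card - ((O ∩ U n) ∩ R n).card := by
      have := Finset.card_inter_add_card_sdiff (O ∩ U n) (R n)
      omega
    rw [c1, c2] at hsd
    have hle1 : ((O ∩ U (n+1)) ∩ R n).card ≤ (O ∩ U (n+1)).card :=
      Finset.card_le_card Finset.inter_subset_left
    have hle2 : ((O ∩ U n) ∩ R n).card ≤ (O ∩ U n).card :=
      Finset.card_le_card Finset.inter_subset_left
    have key : ((O ∩ U (n+1)).card : ℝ) - ((O ∩ Ui (n+1)).card : ℝ)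
        ≤ ((O ∩ U n).card : ℝ) - ((O ∩ R n).card : ℝ) := by
      rw [e1, e2]
      have := (Nat.cast_le (α := ℝ)).mpr hsd
      push_cast [Nat.cast_sub hle1, Nat.cast_sub hle2] at this
      linarith
    have hsplit : ((n+1 : ℕ) : ℝ) * (t : ℝ) / (2 * k)
        = (n : ℝ) * (t : ℝ) / (2 * k) + (t : ℝ) / (2 * k) := by
      push_cast; ring
    rw [hsplit]
    linarith
end

section
/- In a w-random bipartite instance where all n players share the same uniformly random neighbor set of size w (out of n items), and a fixed deterministic simultaneous protocol with messages of length l is run: if p = 2^l·n·C(α,w)/C(n,w), then there exists a realization in which at least (1-p)·n - w players i satisfy both that their neighbor set is α-unsafe for every vertex outside it and that the protocol's output item a_i is not in their neighbor set. -/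
open Finset in
open Classical in
/-- Existence of a hard `w`-random instance: all `n` players share the same `w`-element
neighbor set `V`; running a fixed deterministic simultaneous protocol (messages
`g i` of length `l`, allocation `out` of distinct items computed from the messages),
there is a realization `V` in which at least `(1-p)·n - w` players `i` (where
`p = 2^l·n·C(α,w)/C(n,w)`) both receive an item outside their neighbor set and have a
neighbor set that is `α`-unsafe for every vertex outside it. -/
theorem exists_hard_w_random_instance (n w α l : ℕ)
    (hw : 1 ≤ w) (hwα : w ≤ α) (hαn : α ≤ n) (hl : 1 ≤ l) (hn : 0 < n)
    (g : Fin n → Finset (Fin n) → Fin (2 ^ l))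
    (out : (Fin n → Fin (2 ^ l)) → Fin n → Fin n)
    (hout : ∀ msgs, Function.Injective (out msgs)) :
    ∃ V : Finset (Fin n), V.card = w ∧
      (1 - 2 ^ l * (n : ℝ) * (α.choose w : ℝ) / (n.choose w : ℝ)) * (n : ℝ) - (w : ℝ) ≤
        ((univ.filter (fun i : Fin n =>
          out (fun i' => g i' V) i ∉ V ∧
          ∀ k : Fin n, k ∉ V →
            α ≤ ((univ.filter (fun U : Finset (Fin n) =>
              U.card = w ∧ g i U = g i V ∧ k ∉ U)).biUnion id).card)).card : ℝ) := by
  classical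
  have hwn : w ≤ n := hwα.trans hαn
  set T : Finset (Finset (Fin n)) := Finset.powersetCard w univ with hT
  have hTcard : T.card = n.choose w := by
    simp [hT, Finset.card_powersetCard]
  have hTne : T.Nonempty := by
    rw [hT, Finset.powersetCard_nonempty]
    simpa using hwn
  -- safe predicate
  set safe : Fin n → Finset (Fin n) → Prop := fun i V =>
    ∀ k : Fin n, k ∉ V →
      α ≤ ((univ.filter (fun U : Finset (Fin n) =>
        U.card = w ∧ g i U = g i V ∧ k ∉ U)).biUnion id).card with hsafe
  -- key counting bound per player
  have hA : ∀ i, (T.filter (fun V => ¬ safe i V)).card ≤ 2 ^ l * n * α.choose w := by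
    intro i
    set S : Fin (2 ^ l) × Fin n → Finset (Fin n) := fun p =>
      (univ.filter (fun U : Finset (Fin n) => U.card = w ∧ g i U = p.1 ∧ p.2 ∉ U)).biUnion id
      with hS
    have hsub : T.filter (fun V => ¬ safe i V) ⊆
        (univ : Finset (Fin (2 ^ l) × Fin n)).biUnion
          (fun p => if (S p).card < α then Finset.powersetCard w (S p) else ∅) := by
      intro V hV
      rw [Finset.mem_filter] at hV
      obtain ⟨hVT, hVbad⟩ := hV
      simp only [hsafe] at hVbad
      push_neg at hVbad
      obtain ⟨k, hk, hcard⟩ := hVbad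
      rw [hT, Finset.mem_powersetCard] at hVT
      rw [Finset.mem_biUnion]
      refine ⟨(g i V, k), Finset.mem_univ _, ?_⟩
      rw [if_pos hcard, Finset.mem_powersetCard]
      refine ⟨fun x hx => ?_, hVT.2⟩
      rw [hS]
      apply Finset.mem_biUnion.mpr
      exact ⟨V, by simp [hVT.2, hk], hx⟩
    calc (T.filter (fun V => ¬ safe i V)).card
        ≤ ((univ : Finset (Fin (2 ^ l) × Fin n)).biUnion
            (fun p => if (S p).card < α then Finset.powersetCard w (S p) else ∅)).card :=
          Finset.card_le_card hsub
      _ ≤ ∑ p : Fin (2 ^ l) × Fin n,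
            (if (S p).card < α then Finset.powersetCard w (S p) else ∅).card :=
          Finset.card_biUnion_le
      _ ≤ ∑ _p : Fin (2 ^ l) × Fin n, α.choose w := by
          apply Finset.sum_le_sum
          intro p _
          by_cases h : (S p).card < α
          · rw [if_pos h, Finset.card_powersetCard]
            exact Nat.choose_le_choose w h.le
          · simp [if_neg h]
      _ = 2 ^ l * n * α.choose w := by
          simp [Finset.sum_const, mul_assoc]
  -- double counting
  have hsum : ∑ V ∈ T, (univ.filter (fun i => ¬ safe i V)).card
      = ∑ i : Fin n, (T.filter (fun V => ¬ safe i V)).card := by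
    simp only [Finset.card_filter]
    exact Finset.sum_comm
  have htotal : ∑ V ∈ T, (univ.filter (fun i => ¬ safe i V)).card
      ≤ n * (2 ^ l * n * α.choose w) := by
    rw [hsum]
    calc ∑ i : Fin n, (T.filter (fun V => ¬ safe i V)).card
        ≤ ∑ _i : Fin n, 2 ^ l * n * α.choose w := Finset.sum_le_sum fun i _ => hA i
      _ = n * (2 ^ l * n * α.choose w) := by simp [Finset.sum_const]
  -- choose minimizing V
  obtain ⟨V, hVT, hVmin⟩ := Finset.exists_min_image T
    (fun V => (univ.filter (fun i => ¬ safe i V)).card) hTne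
  have hVcard : V.card = w := (Finset.mem_powersetCard.mp hVT).2
  refine ⟨V, hVcard, ?_⟩
  set Bc := (univ.filter (fun i => ¬ safe i V)).card with hBc
  have hBcbound : Bc * n.choose w ≤ n * (2 ^ l * n * α.choose w) := by
    calc Bc * n.choose w = T.card • Bc := by rw [hTcard]; ring
      _ ≤ ∑ V' ∈ T, (univ.filter (fun i => ¬ safe i V')).card :=
          Finset.card_nsmul_le_sum T _ _ (fun V' hV' => hVmin V' hV')
      _ ≤ n * (2 ^ l * n * α.choose w) := htotal
  -- players receiving an item inside V
  set msgs := fun i' => g i' V with hmsgs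
  have hin : (univ.filter (fun i => out msgs i ∈ V)).card ≤ w := by
    rw [← hVcard]
    apply Finset.card_le_card_of_injOn (out msgs)
    · intro a ha
      exact (Finset.mem_filter.mp ha).2
    · exact fun a _ b _ hab => hout msgs hab
  -- cover univ
  set good := univ.filter (fun i : Fin n => out msgs i ∉ V ∧ safe i V) with hgood
  have hcover : (n : ℕ) ≤ good.card + ((univ.filter (fun i => out msgs i ∈ V)).card + Bc) := by
    have hsubu : (univ : Finset (Fin n)) ⊆
        good ∪ ((univ.filter (fun i => out msgs i ∈ V)) ∪ (univ.filter (fun i => ¬ safe i V))) := by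
      intro i _
      simp only [hgood, Finset.mem_union, Finset.mem_filter, Finset.mem_univ, true_and]
      tauto
    calc (n : ℕ) = (univ : Finset (Fin n)).card := by simp
      _ ≤ (good ∪ ((univ.filter (fun i => out msgs i ∈ V)) ∪ (univ.filter (fun i => ¬ safe i V)))).card :=
          Finset.card_le_card hsubu
      _ ≤ good.card + ((univ.filter (fun i => out msgs i ∈ V)).card + Bc) := by
          refine (Finset.card_union_le _ _).trans ?_
          exact Nat.add_le_add_left (Finset.card_union_le _ _) _
  -- move to reals
  have hCn : (0 : ℝ) < (n.choose w : ℝ) := by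
    exact_mod_cast Nat.choose_pos hwn
  have hBcR : (Bc : ℝ) ≤ 2 ^ l * (n : ℝ) * (α.choose w : ℝ) / (n.choose w : ℝ) * n := by
    rw [div_mul_eq_mul_div, le_div_iff₀ hCn]
    calc (Bc : ℝ) * (n.choose w : ℝ) ≤ (n : ℝ) * (2 ^ l * n * α.choose w) := by
          exact_mod_cast hBcbound
      _ = 2 ^ l * (n : ℝ) * (α.choose w : ℝ) * n := by ring
  have hcoverR : (n : ℝ) ≤ (good.card : ℝ) + ((w : ℝ) + (Bc : ℝ)) := by
    have : (n : ℕ) ≤ good.card + (w + Bc) :=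
      hcover.trans (Nat.add_le_add_left (Nat.add_le_add_right hin _) _)
    exact_mod_cast this
  have hfinal : (1 - 2 ^ l * (n : ℝ) * (α.choose w : ℝ) / (n.choose w : ℝ)) * (n : ℝ) - (w : ℝ)
      ≤ (good.card : ℝ) := by
    have h1 : (1 - 2 ^ l * (n : ℝ) * (α.choose w : ℝ) / (n.choose w : ℝ)) * (n : ℝ)
        = (n : ℝ) - 2 ^ l * (n : ℝ) * (α.choose w : ℝ) / (n.choose w : ℝ) * n := by ring
    linarith
  convert hfinal using 3
end
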